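/- arXiv:2306.15256 — 5 statements merged into one kernel-verified Lean document; each statement's English description precedes it below -/
import Mathlib

section
/- Let M ≥ 1 be a natural number, let n₁,…,n_M be natural numbers with total n = n₁ + ⋯ + n_M, and let τ, τ′ be real numbers. Then the family indexed by tuples (a₁,…,a_M) ∈ ℕ^M given by (tanh τ · tanh τ′)^{a₁+⋯+a_M} · ∏_{m=1}^M C(n_m + a_m, a_m) is summable, and (sech τ · sech τ′)^{n+M} · Σ_{(a₁,…,a_M) ∈ ℕ^M} (tanh τ · tanh τ′)^{a₁+⋯+a_M} · ∏_{m=1}^M C(n_m + a_m, a_m) = (sech(τ′ − τ))^{n+M}. -/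
open Real

lemma hasSum_pi_prod : ∀ (M : ℕ) (g : Fin M → ℕ → ℝ) (S : Fin M → ℝ),
    (∀ m, Summable fun a => ‖g m a‖) → (∀ m, HasSum (g m) (S m)) →
    HasSum (fun f : Fin M → ℕ => ∏ m, g m (f m)) (∏ m, S m) ∧
      Summable (fun f : Fin M → ℕ => ‖∏ m, g m (f m)‖) := by
  intro M
  induction M with
  | zero =>
    intro g S _ _
    simp only [Finset.univ_eq_empty, Finset.prod_empty]
    exact ⟨by simpa using hasSum_fintype (fun _ : Fin 0 → ℕ => (1 : ℝ)), Summable.of_finite⟩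
  | succ M ih =>
    intro g S hn hs
    obtain ⟨ih1, ih2⟩ := ih (fun m => g m.succ) (fun m => S m.succ)
      (fun m => hn m.succ) (fun m => hs m.succ)
    have hnorm : Summable fun p : ℕ × (Fin M → ℕ) =>
        ‖g 0 p.1 * ∏ m : Fin M, g m.succ (p.2 m)‖ := by
      have := Summable.mul_of_nonneg (hn 0) ih2
        (fun a => norm_nonneg _) (fun q => norm_nonneg _)
      exact this.congr fun p => (norm_mul _ _).symm
    have key : HasSum (fun p : ℕ × (Fin M → ℕ) => g 0 p.1 * ∏ m : Fin M, g m.succ (p.2 m))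
        (S 0 * ∏ m : Fin M, S m.succ) :=
      HasSum.mul (f := g 0) (g := fun q : Fin M → ℕ => ∏ m : Fin M, g m.succ (q m)) (hs 0) ih1 hnorm.of_norm
    have hcomp : ∀ p : ℕ × (Fin M → ℕ),
        ∏ m : Fin (M+1), g m (Fin.cons (α := fun _ => ℕ) p.1 p.2 m) =
          g 0 p.1 * ∏ m : Fin M, g m.succ (p.2 m) := by
      intro p
      rw [Fin.prod_univ_succ]
      simp
    constructor
    · rw [Fin.prod_univ_succ]
      refine ((Fin.consEquiv (fun _ : Fin (M+1) => ℕ)).hasSum_iff).1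
        (key.congr_fun fun p => ?_)
      simpa [Fin.consEquiv] using hcomp p
    · refine ((Fin.consEquiv (fun _ : Fin (M+1) => ℕ)).summable_iff
        (f := fun f : Fin (M+1) → ℕ => ‖∏ m, g m (f m)‖)).1 ?_
      refine hnorm.congr fun p => ?_
      simpa [Fin.consEquiv] using congrArg norm (hcomp p).symm

lemma abs_tanh_lt_one' (t : ℝ) : |Real.tanh t| < 1 := by
  rw [Real.tanh_eq_sinh_div_cosh, abs_div, abs_of_pos (Real.cosh_pos t),
    div_lt_one (Real.cosh_pos t)]
  nlinarith [Real.cosh_sq t, abs_nonneg (Real.sinh t), sq_abs (Real.sinh t), Real.cosh_pos t]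

/-- Series identity for the fidelity between outputs of two `M`-mode quantum-limited
amplifier channels with gains `cosh² τ` and `cosh² τ'`: the family over tuples
`(a₁,…,a_M) ∈ ℕ^M` given by `(tanh τ · tanh τ')^{∑ aₘ} · ∏ₘ C(nₘ + aₘ, aₘ)` is summable,
and `(sech τ · sech τ')^{n+M}` times its sum equals `(sech (τ' − τ))^{n+M}`,
where `n = n₁ + ⋯ + n_M`. -/
theorem stmt_1 (M : ℕ) (hM : 1 ≤ M) (n : Fin M → ℕ) (τ τ' : ℝ) :
    Summable (fun f : Fin M → ℕ =>
      (Real.tanh τ * Real.tanh τ') ^ (∑ m, f m) * ∏ m, ((n m + f m).choose (f m) : ℝ)) ∧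
    ((Real.cosh τ)⁻¹ * (Real.cosh τ')⁻¹) ^ ((∑ m, n m) + M) *
      (∑' f : Fin M → ℕ,
        (Real.tanh τ * Real.tanh τ') ^ (∑ m, f m) * ∏ m, ((n m + f m).choose (f m) : ℝ))
      = ((Real.cosh (τ' - τ))⁻¹) ^ ((∑ m, n m) + M) := by
  set x : ℝ := Real.tanh τ * Real.tanh τ' with hxdef
  have hx : ‖x‖ < 1 := by
    rw [Real.norm_eq_abs, hxdef, abs_mul]
    nlinarith [abs_tanh_lt_one' τ, abs_tanh_lt_one' τ', abs_nonneg (Real.tanh τ),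
      abs_nonneg (Real.tanh τ')]
  -- single-mode sums
  set g : Fin M → ℕ → ℝ := fun m a => x ^ a * ((n m + a).choose a : ℝ) with hgdef
  have hchoose : ∀ (k a : ℕ), ((k + a).choose a : ℝ) = ((a + k).choose k : ℝ) := by
    intro k a
    congr 1
    have h2 : a + k - k = a := by omega
    have h3 := Nat.choose_symm (Nat.le_add_left k a)
    rw [h2] at h3
    rw [Nat.add_comm k a, ← h3]
  have hgsum : ∀ m, HasSum (g m) (1 / (1 - x) ^ (n m + 1)) := by
    intro m
    have h := hasSum_choose_mul_geometric_of_norm_lt_one (𝕜 := ℝ) (n m) hx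
    refine h.congr_fun fun a => ?_
    rw [hgdef, hchoose, mul_comm]
  have hgnorm : ∀ m, Summable fun a => ‖g m a‖ := by
    intro m
    have hx' : ‖|x|‖ < 1 := by rwa [Real.norm_eq_abs, abs_abs, ← Real.norm_eq_abs]
    have h := (hasSum_choose_mul_geometric_of_norm_lt_one (𝕜 := ℝ) (n m) hx').summable
    refine h.congr fun a => ?_
    rw [hgdef]
    simp only [norm_mul, Real.norm_eq_abs, abs_pow, Nat.abs_cast, hchoose, mul_comm]
  obtain ⟨hsum, hnorm⟩ := hasSum_pi_prod M g (fun m => 1 / (1 - x) ^ (n m + 1)) hgnorm hgsum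
  have hterm : ∀ f : Fin M → ℕ,
      x ^ (∑ m, f m) * ∏ m, ((n m + f m).choose (f m) : ℝ) = ∏ m, g m (f m) := by
    intro f
    rw [hgdef, Finset.prod_mul_distrib, Finset.prod_pow_eq_pow_sum]
  have hsum' : HasSum (fun f : Fin M → ℕ =>
      x ^ (∑ m, f m) * ∏ m, ((n m + f m).choose (f m) : ℝ))
      (∏ m, 1 / (1 - x) ^ (n m + 1)) := hsum.congr_fun fun f => (hterm f)
  refine ⟨hsum'.summable, ?_⟩
  rw [hsum'.tsum_eq]
  -- algebra
  have h1x : (1 : ℝ) - x ≠ 0 := by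
    have : |x| < 1 := by rwa [Real.norm_eq_abs] at hx
    have := abs_lt.1 this
    linarith [this.2]
  have hprod : ∏ m, 1 / (1 - x) ^ (n m + 1) = (1 / (1 - x)) ^ ((∑ m, n m) + M) := by
    simp_rw [← one_div_pow]
    rw [Finset.prod_pow_eq_pow_sum]
    congr 1
    rw [Finset.sum_add_distrib, Finset.sum_const, smul_eq_mul, mul_one,
      Finset.card_univ, Fintype.card_fin]
  rw [hprod, ← mul_pow]
  congr 1
  have hc : Real.cosh τ ≠ 0 := (Real.cosh_pos τ).ne'
  have hc' : Real.cosh τ' ≠ 0 := (Real.cosh_pos τ').ne'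
  have hkey : (1 - x) * (Real.cosh τ * Real.cosh τ') = Real.cosh (τ' - τ) := by
    rw [Real.cosh_sub, hxdef, Real.tanh_eq_sinh_div_cosh, Real.tanh_eq_sinh_div_cosh]
    field_simp
  rw [← hkey, mul_inv, mul_inv, one_div]
  ring
end

section
/- Let κ ∈ [0,1] and N_B ≥ 0 be real, and set G = (1−κ)·N_B + 1 and η = κ/G. Then for every function χ : ℂ → ℂ and every ξ ∈ ℂ: (A_G(L_η χ))(ξ) = χ(√κ·ξ)·exp(−(1−κ)·(N_B + 1/2)·|ξ|²). That is, the thermal loss channel of transmittance κ and environment brightness N_B decomposes as a quantum-limited attenuator of transmittance κ/((1−κ)N_B+1) followed by a quantum-limited amplifier of gain (1−κ)N_B+1, at the level of characteristic-function transformations. -/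
/-! The attenuator and the amplifier both rescale the argument by `√s` and add Gaussian noise
of variance `v`. Such maps compose by multiplying the scalings and adding the variances, the
variance of the first map being multiplied by the scaling of the second.
The thermal loss channel is the case `s = κ`, `v = (1−κ)(2N_B+1)`. -/

/-- Characteristic-function action of the quantum-limited attenuator of transmittance `η`:
`(L_η χ)(ξ) = χ(√η ξ) · exp(−(1−η)|ξ|²/2)`. -/
noncomputable def lossCF (η : ℝ) (χ : ℂ → ℂ) : ℂ → ℂ :=
  fun ξ => χ ((Real.sqrt η : ℂ) * ξ) * Complex.exp (-((1 - η) * ‖ξ‖ ^ 2 / 2 : ℝ))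

/-- Characteristic-function action of the quantum-limited amplifier of gain `G`:
`(A_G χ)(ξ) = χ(√G ξ) · exp(−(G−1)|ξ|²/2)`. -/
noncomputable def ampCF (G : ℝ) (χ : ℂ → ℂ) : ℂ → ℂ :=
  fun ξ => χ ((Real.sqrt G : ℂ) * ξ) * Complex.exp (-((G - 1) * ‖ξ‖ ^ 2 / 2 : ℝ))

noncomputable def gaussCF (s v : ℝ) (χ : ℂ → ℂ) : ℂ → ℂ :=
  fun ξ => χ ((Real.sqrt s : ℂ) * ξ) * Complex.exp (-(v * ‖ξ‖ ^ 2 / 2 : ℝ))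

theorem lossCF_eq_gaussCF (η : ℝ) : lossCF η = gaussCF η (1 - η) := rfl

theorem ampCF_eq_gaussCF (G : ℝ) : ampCF G = gaussCF G (G - 1) := rfl

theorem norm_sqrt_mul_sq {s : ℝ} (hs : 0 ≤ s) (ξ : ℂ) :
    ‖(Real.sqrt s : ℂ) * ξ‖ ^ 2 = s * ‖ξ‖ ^ 2 := by
  rw [norm_mul, mul_pow, Complex.norm_real, Real.norm_of_nonneg (Real.sqrt_nonneg s),
    Real.sq_sqrt hs]

theorem gaussCF_gaussCF {s : ℝ} (hs : 0 ≤ s) (v t w : ℝ) (χ : ℂ → ℂ) :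
    gaussCF s v (gaussCF t w χ) = gaussCF (t * s) (w * s + v) χ := by
  funext ξ
  have hscale : (Real.sqrt t : ℂ) * ((Real.sqrt s : ℂ) * ξ) = (Real.sqrt (t * s) : ℂ) * ξ := by
    rw [Real.sqrt_mul' t hs, Complex.ofReal_mul, mul_assoc]
  simp only [gaussCF]
  rw [hscale, norm_sqrt_mul_sq hs, mul_assoc, ← Complex.exp_add]
  congr 2
  push_cast
  ring

theorem stmt_9_general (κ NB : ℝ) (hκ1 : κ ≤ 1) (hNB : 0 ≤ NB)
    (G η : ℝ) (hG : G = (1 - κ) * NB + 1) (hη : η = κ / G) :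
    ∀ (χ : ℂ → ℂ) (ξ : ℂ),
      ampCF G (lossCF η χ) ξ
        = χ ((Real.sqrt κ : ℂ) * ξ) *
            Complex.exp (-((1 - κ) * (NB + 1 / 2) * ‖ξ‖ ^ 2 : ℝ)) := by
  intro χ ξ
  have hG1 : 1 ≤ G := by nlinarith
  have hηG : η * G = κ := by rw [hη, div_mul_cancel₀ κ (by linarith)]
  rw [ampCF_eq_gaussCF, lossCF_eq_gaussCF, gaussCF_gaussCF (by linarith), hηG]
  simp only [gaussCF]
  congr 4
  linear_combination (-‖ξ‖ ^ 2 / 2) * hηG + ‖ξ‖ ^ 2 * hG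

/-- The thermal loss channel of transmittance `κ` and environment brightness `N_B`
decomposes, at the level of characteristic functions, as the attenuator of transmittance
`η = κ/((1−κ)N_B+1)` followed by the amplifier of gain `G = (1−κ)N_B+1`:
`(A_G (L_η χ))(ξ) = χ(√κ ξ) · exp(−(1−κ)(N_B+1/2)|ξ|²)`. -/
theorem stmt_9 (κ NB : ℝ) (hκ0 : 0 ≤ κ) (hκ1 : κ ≤ 1) (hNB : 0 ≤ NB)
    (G η : ℝ) (hG : G = (1 - κ) * NB + 1) (hη : η = κ / G) :
    ∀ (χ : ℂ → ℂ) (ξ : ℂ),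
      ampCF G (lossCF η χ) ξ
        = χ ((Real.sqrt κ : ℂ) * ξ) *
            Complex.exp (-((1 - κ) * (NB + 1 / 2) * ‖ξ‖ ^ 2 : ℝ)) :=
  stmt_9_general κ NB hκ1 hNB G η hG hη
end

section
/- Let N ≥ 0, M ≥ 0, N_B > 0 and 0 < κ < 1 be real, and set D = (1−κ)·N_B + 1, η(κ) = κ/D and G(κ) = D. Then η has derivative η′(κ) = (N_B+1)/D² and G has derivative G′(κ) = −N_B at κ, and N·η′(κ)²/(η(κ)·(1−η(κ))) + (η(κ)·N + M)·G′(κ)²/(G(κ)·(G(κ)−1)) = N·((1+κ²)·N_B + 1)/(κ·(1−κ)·D²) + M·N_B/((1−κ)·D). In particular, the universal QFI upper bound of the paper's Theorem 2 for transmittance sensing of the thermal loss channel with passive signature equals this expression. -/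
/-! The two denominators of the bound factor as `η(1−η) = κ(1−κ)(N_B+1)/D²` and
`G(G−1) = (1−κ)N_B·D`; after that the identity is a rational-function computation, in which the
`N`-terms combine through `(N_B+1) + κ²N_B = (1+κ²)N_B+1`. -/

lemma hasDerivAt_one_sub_mul_add_one (NB x : ℝ) :
    HasDerivAt (fun y : ℝ => (1 - y) * NB + 1) (-NB) x := by
  simpa using (((hasDerivAt_const x 1).sub (hasDerivAt_id x)).mul_const NB).add_const 1

lemma hasDerivAt_div_one_sub_mul_add_one {NB x : ℝ} (hx : (1 - x) * NB + 1 ≠ 0) :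
    HasDerivAt (fun y : ℝ => y / ((1 - y) * NB + 1))
      ((NB + 1) / ((1 - x) * NB + 1) ^ 2) x :=
  ((hasDerivAt_id' x).div (hasDerivAt_one_sub_mul_add_one NB x) hx).congr_deriv (by ring)

lemma div_mul_one_sub_div_of_eq {NB κ D : ℝ} (hD : D = (1 - κ) * NB + 1) (hD0 : D ≠ 0) :
    κ / D * (1 - κ / D) = κ * (1 - κ) * (NB + 1) / D ^ 2 := by
  field_simp
  rw [hD]
  ring

lemma thermalLoss_qfiBound_eq {N M NB κ D : ℝ} (hκ0 : κ ≠ 0) (hκ1 : κ ≠ 1) (hD0 : D ≠ 0)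
    (hD : D = (1 - κ) * NB + 1) :
    N * ((NB + 1) / D ^ 2) ^ 2 / ((κ / D) * (1 - κ / D))
      + ((κ / D) * N + M) * (-NB) ^ 2 / (D * (D - 1))
      = N * ((1 + κ ^ 2) * NB + 1) / (κ * (1 - κ) * D ^ 2)
        + M * NB / ((1 - κ) * D) := by
  have hκ1' : 1 - κ ≠ 0 := sub_ne_zero.mpr (Ne.symm hκ1)
  have hG1 : D - 1 = (1 - κ) * NB := by rw [hD]; ring
  rw [div_mul_one_sub_div_of_eq hD hD0, hG1]
  field_simp
  ring

theorem stmt_13_general (N M NB κ : ℝ) (hNB : 0 < NB)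
    (hκ0 : 0 < κ) (hκ1 : κ < 1) (D : ℝ) (hD : D = (1 - κ) * NB + 1) :
    HasDerivAt (fun x : ℝ => x / ((1 - x) * NB + 1)) ((NB + 1) / D ^ 2) κ ∧
    HasDerivAt (fun x : ℝ => (1 - x) * NB + 1) (-NB) κ ∧
    N * ((NB + 1) / D ^ 2) ^ 2 / ((κ / D) * (1 - κ / D))
      + ((κ / D) * N + M) * (-NB) ^ 2 / (D * (D - 1))
      = N * ((1 + κ ^ 2) * NB + 1) / (κ * (1 - κ) * D ^ 2)
        + M * NB / ((1 - κ) * D) := by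
  have hD0 : D ≠ 0 := by rw [hD]; nlinarith
  refine ⟨?_, hasDerivAt_one_sub_mul_add_one NB κ, ?_⟩
  · exact hD ▸ hasDerivAt_div_one_sub_mul_add_one (hD ▸ hD0)
  · exact thermalLoss_qfiBound_eq hκ0.ne' hκ1.ne hD0 hD

/-- Specialization of the universal QFI upper bound (Theorem 2 of the paper) to
transmittance sensing of the thermal loss channel with passive signature: with
`D = (1−κ)N_B + 1`, `η(κ) = κ/D` and `G(κ) = D`, the derivatives are
`η'(κ) = (N_B+1)/D²` and `G'(κ) = −N_B`, and the bound
`N η'²/(η(1−η)) + (ηN+M) G'²/(G(G−1))` equals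
`N((1+κ²)N_B+1)/(κ(1−κ)D²) + M N_B/((1−κ)D)`. -/
theorem stmt_13 (N M NB κ : ℝ) (hN : 0 ≤ N) (hM : 0 ≤ M) (hNB : 0 < NB)
    (hκ0 : 0 < κ) (hκ1 : κ < 1) (D : ℝ) (hD : D = (1 - κ) * NB + 1) :
    HasDerivAt (fun x : ℝ => x / ((1 - x) * NB + 1)) ((NB + 1) / D ^ 2) κ ∧
    HasDerivAt (fun x : ℝ => (1 - x) * NB + 1) (-NB) κ ∧
    N * ((NB + 1) / D ^ 2) ^ 2 / ((κ / D) * (1 - κ / D))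
      + ((κ / D) * N + M) * (-NB) ^ 2 / (D * (D - 1))
      = N * ((1 + κ ^ 2) * NB + 1) / (κ * (1 - κ) * D ^ 2)
        + M * NB / ((1 - κ) * D) :=
  stmt_13_general N M NB κ hNB hκ0 hκ1 D hD
end

section
/- Let M > 0, N_S ≥ 0, N_B ≥ 0 and 0 < κ < 1 be real, and set N = M·N_S, D = (1−κ)·N_B + 1 and D_S = (1−κ)·(N_S + N_B + 2·N_S·N_B) + 1. Then N·((1−κ)·N_S + 2κ·N_B + 1)/(κ·(1−κ)·D_S) + M·N_B/((1−κ)·D_S) ≤ N·((1+κ²)·N_B + 1)/(κ·(1−κ)·D²) + M·N_B/((1−κ)·D). That is, the QFI of M iid two-mode squeezed vacuum probes for sensing the transmittance κ of a thermal loss channel (passive-signature paradigm) never exceeds the paper's universal upper bound. -/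
/-- The QFI of `M` iid two-mode squeezed vacuum probes for sensing the transmittance `κ`
of a thermal loss channel (passive-signature paradigm) never exceeds the paper's
universal upper bound. Here `N = M N_S`, `D = (1−κ)N_B + 1` and
`D_S = (1−κ)(N_S + N_B + 2 N_S N_B) + 1`. -/
theorem stmt_17 (M NS NB κ : ℝ) (hM : 0 < M) (hNS : 0 ≤ NS) (hNB : 0 ≤ NB)
    (hκ0 : 0 < κ) (hκ1 : κ < 1)
    (N D DS : ℝ) (hN : N = M * NS) (hD : D = (1 - κ) * NB + 1)
    (hDS : DS = (1 - κ) * (NS + NB + 2 * NS * NB) + 1) :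
    N * ((1 - κ) * NS + 2 * κ * NB + 1) / (κ * (1 - κ) * DS)
        + M * NB / ((1 - κ) * DS)
      ≤ N * ((1 + κ ^ 2) * NB + 1) / (κ * (1 - κ) * D ^ 2)
        + M * NB / ((1 - κ) * D) := by
  have h1 : (0:ℝ) < 1 - κ := by linarith
  have hDpos : 0 < D := by rw [hD]; positivity
  have hDSpos : 0 < DS := by nlinarith [mul_nonneg hNS hNB]
  have hDne : D ≠ 0 := ne_of_gt hDpos
  have hDSne : DS ≠ 0 := ne_of_gt hDSpos
  have hκne : κ ≠ 0 := ne_of_gt hκ0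
  have h1ne : (1 - κ) ≠ 0 := ne_of_gt h1
  rw [← sub_nonneg]
  have key :
      N * ((1 + κ ^ 2) * NB + 1) / (κ * (1 - κ) * D ^ 2)
        + M * NB / ((1 - κ) * D)
        - (N * ((1 - κ) * NS + 2 * κ * NB + 1) / (κ * (1 - κ) * DS)
        + M * NB / ((1 - κ) * DS))
      = M * (NS ^ 2 * NB * (1 + NB) * (1 + κ) ^ 2 * (1 - κ))
        / (κ * (1 - κ) * D ^ 2 * DS) := by
    subst hN hD hDS
    field_simp
    ring
  rw [key]
  positivity
end

section
/- Let M > 0, N_S ≥ 0 and γ > 0 be real, and set N = M·N_S. Then (2N + M)/(γ·((2·N_S + 1)·γ + 1)) ≤ 2N/(γ·(γ+1)²) + M/(γ·(γ+1)). That is, the QFI of M iid two-mode squeezed vacuum probes of per-mode brightness N_S for sensing the noise level γ of an additive-noise channel never exceeds the paper's universal upper bound, with equality when N_S = 0. -/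
/-! Both sides are `M` times a rational function of `N_S` and `γ`, and over a common
denominator their difference is `4 M N_S² / ((γ + 1)² ((2 N_S + 1) γ + 1))`: nonnegative,
and zero exactly when `N_S = 0`. -/

/-- `𝒦_γ[TMSV]`, written with `N = M N_S`. -/
noncomputable def tmsvNoiseQFI (M NS γ : ℝ) : ℝ :=
  (2 * (M * NS) + M) / (γ * ((2 * NS + 1) * γ + 1))

/-- `𝒦̃_γ`, written with `N = M N_S`. -/
noncomputable def universalNoiseQFIBound (M NS γ : ℝ) : ℝ :=
  2 * (M * NS) / (γ * (γ + 1) ^ 2) + M / (γ * (γ + 1))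

theorem universalNoiseQFIBound_sub_tmsvNoiseQFI (M : ℝ) {NS γ : ℝ} (hNS : 0 ≤ NS)
    (hγ : 0 < γ) :
    universalNoiseQFIBound M NS γ - tmsvNoiseQFI M NS γ
      = 4 * M * NS ^ 2 / ((γ + 1) ^ 2 * ((2 * NS + 1) * γ + 1)) := by
  have hden : (2 * NS + 1) * γ + 1 ≠ 0 := by positivity
  unfold universalNoiseQFIBound tmsvNoiseQFI
  field_simp
  ring

theorem tmsvNoiseQFI_le_universalNoiseQFIBound {M NS γ : ℝ} (hM : 0 ≤ M) (hNS : 0 ≤ NS)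
    (hγ : 0 < γ) : tmsvNoiseQFI M NS γ ≤ universalNoiseQFIBound M NS γ := by
  rw [← sub_nonneg, universalNoiseQFIBound_sub_tmsvNoiseQFI M hNS hγ]
  positivity

theorem tmsvNoiseQFI_zero_eq_universalNoiseQFIBound (M : ℝ) {γ : ℝ} (hγ : 0 < γ) :
    tmsvNoiseQFI M 0 γ = universalNoiseQFIBound M 0 γ := by
  rw [eq_comm, ← sub_eq_zero, universalNoiseQFIBound_sub_tmsvNoiseQFI M le_rfl hγ]
  simp

/-- The QFI of `M` iid two-mode squeezed vacuum probes of per-mode brightness `N_S`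
(total signal energy `N = M N_S`) for sensing the noise level `γ` of an additive-noise
channel never exceeds the paper's universal upper bound, with equality when `N_S = 0`. -/
theorem stmt_18 (M NS γ : ℝ) (hM : 0 < M) (hNS : 0 ≤ NS) (hγ : 0 < γ)
    (N : ℝ) (hN : N = M * NS) :
    (2 * N + M) / (γ * ((2 * NS + 1) * γ + 1))
      ≤ 2 * N / (γ * (γ + 1) ^ 2) + M / (γ * (γ + 1)) ∧
    (NS = 0 →
      (2 * N + M) / (γ * ((2 * NS + 1) * γ + 1))
        = 2 * N / (γ * (γ + 1) ^ 2) + M / (γ * (γ + 1))) := by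
  subst hN
  refine ⟨tmsvNoiseQFI_le_universalNoiseQFIBound hM.le hNS hγ, fun hNS₀ => ?_⟩
  subst hNS₀
  exact tmsvNoiseQFI_zero_eq_universalNoiseQFIBound M hγ
end
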